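/- Let X be a locally path connected and semilocally simply connected topological space. Let Π₁(X)^{(2)} = {(a,b) ∈ Π₁(X) × Π₁(X) : s(a) = r(b)} carry the subspace topology of the product. Then the composition map Π₁(X)^{(2)} → Π₁(X), which sends ([α],[β]) with α(0) = β(1) to the path-homotopy class [α ⧠ β] of the concatenation, is well defined and continuous. -/

import Mathlib

open unitInterval

noncomputable section

variable {X : Type*} [TopologicalSpace X]

/-- The path-homotopy (homotopy relative to `{0,1}`) relation on `C(I, X)`. -/
def pRel (f g : C(I, X)) : Prop := f.HomotopicRel g {0, 1}

/-- The path-homotopy setoid on `C(I, X)`. -/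
def pSetoid (X : Type*) [TopologicalSpace X] : Setoid C(I, X) :=
  ⟨pRel, ContinuousMap.HomotopicRel.equivalence⟩

/-- The fundamental groupoid `Π₁(X)` as the quotient of the path space `P(X) = C(I, X)`
(with the compact-open topology) by path homotopy; it carries the quotient (CO') topology. -/
abbrev Pi1 (X : Type*) [TopologicalSpace X] := Quotient (pSetoid X)

/-- The quotient map `q : P(X) → Π₁(X)`. -/
def pq : C(I, X) → Pi1 X := Quotient.mk (pSetoid X)

theorem pRel.endpts {f g : C(I, X)} (h : pRel f g) {t : I} (ht : t ∈ ({0, 1} : Set I)) :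
    f t = g t := h.some.fst_eq_snd ht

/-- The source map `s : Π₁(X) → X`, `[γ] ↦ γ(0)`. -/
def srcMap : Pi1 X → X :=
  Quotient.lift (fun f : C(I, X) => f 0) fun _ _ h =>
    pRel.endpts h (by simp)

/-- The range map `r : Π₁(X) → X`, `[γ] ↦ γ(1)`. -/
def rngMap : Pi1 X → X :=
  Quotient.lift (fun f : C(I, X) => f 1) fun _ _ h =>
    pRel.endpts h (by simp)

/-- A continuous map `I → X` regarded as a `Path` between its endpoints. -/
def toPath (f : C(I, X)) : Path (f 0) (f 1) := ⟨f, rfl, rfl⟩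

/-- Concatenation `α ⧠ β` of paths: traverse `β` first and then `α`
(given `β 1 = α 0`). -/
def concat (α β : C(I, X)) (h : β 1 = α 0) : C(I, X) :=
  ((toPath β).trans ((toPath α).cast h rfl)).toContinuousMap

@[simp] theorem concat_zero (α β : C(I, X)) (h : β 1 = α 0) : concat α β h 0 = β 0 :=
  ((toPath β).trans ((toPath α).cast h rfl)).source

@[simp] theorem concat_one (α β : C(I, X)) (h : β 1 = α 0) : concat α β h 1 = α 1 :=
  ((toPath β).trans ((toPath α).cast h rfl)).target

/-- The set `N([γ], U, V) = {[δ ⧠ γ ⧠ θ] : δ a path in U with δ 0 = γ 1,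
θ a path in V with θ 1 = γ 0}` in `Π₁(X)`. -/
def Nhd (a : Pi1 X) (U V : Set X) : Set (Pi1 X) :=
  { b | ∃ (γ δ θ : C(I, X)) (h₁ : θ 1 = γ 0) (h₂ : γ 1 = δ 0),
      pq γ = a ∧ Set.range δ ⊆ U ∧ Set.range θ ⊆ V ∧
      b = pq (concat δ (concat γ θ h₁) ((concat_one γ θ h₁).trans h₂)) }

/-- A subset `U ⊆ X` is relatively inessential in `X` if every loop in `U` is
null-homotopic (path-homotopic to a constant path) in `X`. -/
def RelInessential (X : Type*) [TopologicalSpace X] (U : Set X) : Prop :=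
  ∀ γ : C(I, X), Set.range γ ⊆ U → γ 1 = γ 0 →
    pRel γ (ContinuousMap.const I (γ 0))

/-- `X` is semilocally simply connected if every point has a relatively inessential
open neighbourhood. -/
def SemilocSimplyConnected (X : Type*) [TopologicalSpace X] : Prop :=
  ∀ x : X, ∃ U : Set X, IsOpen U ∧ x ∈ U ∧ RelInessential X U

/-!
Concatenation is continuous on composable pairs of paths, so it suffices that
`P(X)^{(2)} → Π₁(X)^{(2)}` is a quotient map. It is the restriction of `q × q` to a saturated
subspace, so this holds as soon as `q : P(X) → Π₁(X)` is open.

For openness, let `α ∈ W` with `W` open and `β ∼ α`.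
* Every path `β'` near `β` is homotopic to `θ ⬝ β ⬝ δ` (traversing `θ` first) with `θ, δ` short
  paths at the endpoints. On a short subinterval this holds because `β` and `β'` lie in one
  relatively inessential set; such statements compose along `[0, 1]` because the two whiskers
  meeting at an intermediate point form a loop in a relatively inessential set, and `[0, 1]` is
  connected.
* Whiskering `α` by short enough paths and giving the whiskers time `s → 0` lands in `W`.
Hence `[β'] = [θ ⬝ α ⬝ δ] ∈ q(W)`.
-/

open Set Filter Topology

@[simp] theorem coe_toPath (f : C(I, X)) : ⇑(toPath f) = f := rfl

@[simp] theorem srcMap_pq (f : C(I, X)) : srcMap (pq f) = f 0 := rfl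

@[simp] theorem rngMap_pq (f : C(I, X)) : rngMap (pq f) = f 1 := rfl

theorem pq_eq_pq_iff_homotopic {x y : X} {p q : Path x y} :
    pq p.toContinuousMap = pq q.toContinuousMap ↔ p.Homotopic q :=
  Quotient.eq (r := pSetoid X)

theorem pq_trans_congr {x y z x' y' z' : X} {p : Path x y} {q : Path y z} {p' : Path x' y'}
    {q' : Path y' z'} (hp : pq p.toContinuousMap = pq p'.toContinuousMap)
    (hq : pq q.toContinuousMap = pq q'.toContinuousMap) :
    pq (p.trans q).toContinuousMap = pq (p'.trans q').toContinuousMap := by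
  obtain rfl : x = x' := by simpa using congrArg srcMap hp
  obtain rfl : y = y' := by simpa using congrArg rngMap hp
  obtain rfl : z = z' := by simpa using congrArg rngMap hq
  exact pq_eq_pq_iff_homotopic.2
    ((pq_eq_pq_iff_homotopic.1 hp).hcomp (pq_eq_pq_iff_homotopic.1 hq))

theorem pq_concat_congr {α α' β β' : C(I, X)} (hα : pq α = pq α') (hβ : pq β = pq β')
    (h : β 1 = α 0) (h' : β' 1 = α' 0) : pq (concat α β h) = pq (concat α' β' h') :=
  pq_trans_congr hβ hα

theorem isQuotientMap_pq : IsQuotientMap (pq : C(I, X) → Pi1 X) := isQuotientMap_quot_mk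

theorem RelInessential.homotopic {U : Set X} (hU : RelInessential X U) {x y : X}
    {p q : Path x y} (hp : range p ⊆ U) (hq : range q ⊆ U) : p.Homotopic q := by
  have hloop : (p.trans q.symm).Homotopic (Path.refl x) := by
    have := hU (p.trans q.symm).toContinuousMap
      (by simpa [Path.trans_range, Path.symm_range] using union_subset hp hq) (by simp)
    simp only [Path.coe_toContinuousMap, Path.source] at this
    exact this
  rw [← Path.Homotopic.Quotient.eq] at hloop ⊢
  simpa [Path.Homotopic.Quotient.mk_trans, Path.Homotopic.Quotient.mk_symm,
    Path.Homotopic.Quotient.mk_refl] using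
    congrArg (fun r => r.trans (Path.Homotopic.Quotient.mk q)) hloop

def subpathOf (β : C(I, X)) (a b : I) : Path (β a) (β b) := (toPath β).subpath a b

theorem range_subpathOf (β : C(I, X)) (a b : I) : range (subpathOf β a b) = β '' uIcc a b :=
  Path.range_subpath _ _ _

theorem subpathOf_trans_homotopic (β : C(I, X)) (a b c : I) :
    ((subpathOf β a b).trans (subpathOf β b c)).Homotopic (subpathOf β a c) :=
  ⟨Path.Homotopy.subpathTransSubpath (toPath β) a b c⟩

theorem toContinuousMap_subpathOf_zero_one (β : C(I, X)) :
    (subpathOf β 0 1).toContinuousMap = β :=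
  congrArg Path.toContinuousMap (Path.subpath_zero_one (toPath β))

def WhiskeredNear (β : C(I, X)) (a b : I) : Prop :=
  ∀ V ∈ 𝓝 (β a), ∀ U ∈ 𝓝 (β b), ∀ᶠ β' in 𝓝 β,
    ∃ (θ : Path (β' a) (β a)) (δ : Path (β b) (β' b)), range θ ⊆ V ∧ range δ ⊆ U ∧
      (subpathOf β' a b).Homotopic ((θ.trans (subpathOf β a b)).trans δ)

theorem whiskeredNear_of_mapsTo [LocallyPathConnectedSpace X] {W : Set X} (hWo : IsOpen W)
    (hW : RelInessential X W) {β : C(I, X)} {a b : I} (hβ : MapsTo β (uIcc a b) W) :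
    WhiskeredNear β a b := by
  intro V hV U hU
  obtain ⟨A, ⟨hA, hAc⟩, hAVW⟩ := (path_connected_basis (β a)).mem_iff.1
    (inter_mem hV (hWo.mem_nhds (hβ left_mem_uIcc)))
  obtain ⟨B, ⟨hB, hBc⟩, hBUW⟩ := (path_connected_basis (β b)).mem_iff.1
    (inter_mem hU (hWo.mem_nhds (hβ right_mem_uIcc)))
  filter_upwards [ContinuousMap.eventually_mapsTo isCompact_uIcc hWo hβ,
    (continuous_eval_const a).continuousAt.preimage_mem_nhds hA,
    (continuous_eval_const b).continuousAt.preimage_mem_nhds hB] with β' hβ' ha hb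
  obtain ⟨θ, hθ⟩ := hAc.joinedIn _ ha _ (mem_of_mem_nhds hA)
  obtain ⟨δ, hδ⟩ := hBc.joinedIn _ (mem_of_mem_nhds hB) _ hb
  have hθA : range θ ⊆ A := range_subset_iff.2 hθ
  have hδB : range δ ⊆ B := range_subset_iff.2 hδ
  refine ⟨θ, δ, hθA.trans (hAVW.trans inter_subset_left),
    hδB.trans (hBUW.trans inter_subset_left), hW.homotopic ?_ ?_⟩
  · simpa [range_subpathOf] using hβ'.image_subset
  · simp only [Path.trans_range, range_subpathOf]
    exact union_subset (union_subset (hθA.trans (hAVW.trans inter_subset_right))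
      hβ.image_subset) (hδB.trans (hBUW.trans inter_subset_right))

theorem WhiskeredNear.trans (hX : SemilocSimplyConnected X) {β : C(I, X)} {a b c : I}
    (hab : WhiskeredNear β a b) (hbc : WhiskeredNear β b c) : WhiskeredNear β a c := by
  intro V hV U hU
  obtain ⟨M, hMo, hbM, hM⟩ := hX (β b)
  filter_upwards [hab V hV M (hMo.mem_nhds hbM), hbc M (hMo.mem_nhds hbM) U hU] with β'
    ⟨θ₁, δ₁, hθ₁, hδ₁, h₁⟩ ⟨θ₂, δ₂, hθ₂, hδ₂, h₂⟩
  refine ⟨θ₁, δ₂, hθ₁, hδ₂, ?_⟩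
  have hloop : (δ₁.trans θ₂).Homotopic (Path.refl (β b)) :=
    hM.homotopic (by simpa [Path.trans_range] using union_subset hδ₁ hθ₂) (by simpa using hbM)
  rw [← Path.Homotopic.Quotient.eq] at h₁ h₂ hloop ⊢
  have hsplit := Path.Homotopic.Quotient.eq.2 (subpathOf_trans_homotopic β a b c)
  rw [← Path.Homotopic.Quotient.eq.2 (subpathOf_trans_homotopic β' a b c)]
  simp only [Path.Homotopic.Quotient.mk_trans] at h₁ h₂ hloop hsplit ⊢
  rw [h₁, h₂, ← hsplit]
  simp only [Path.Homotopic.Quotient.trans_assoc]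
  rw [← Path.Homotopic.Quotient.trans_assoc (Path.Homotopic.Quotient.mk δ₁), hloop]
  simp

theorem eventually_whiskeredNear [LocallyPathConnectedSpace X] (hX : SemilocSimplyConnected X)
    (β : C(I, X)) (a : I) : ∀ᶠ b in 𝓝 a, WhiskeredNear β a b ∧ WhiskeredNear β b a := by
  obtain ⟨W, hWo, haW, hW⟩ := hX (β a)
  have hsmall := (tendsto_const_nhds (x := a)).uIcc (tendsto_id (x := 𝓝 a))
  filter_upwards [tendsto_smallSets_iff.1 hsmall _
    (β.continuous.continuousAt.preimage_mem_nhds (hWo.mem_nhds haW))] with b hb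
  exact ⟨whiskeredNear_of_mapsTo hWo hW hb, whiskeredNear_of_mapsTo hWo hW (uIcc_comm a b ▸ hb)⟩

theorem whiskeredNear_zero_one [LocallyPathConnectedSpace X] (hX : SemilocSimplyConnected X)
    (β : C(I, X)) : WhiskeredNear β 0 1 :=
  PreconnectedSpace.induction₂' _ (eventually_whiskeredNear hX β)
    ⟨fun _ _ _ => WhiskeredNear.trans hX⟩ 0 1

/-- For `0 < s ≤ 1/4` this is piecewise linear, mapping `[0, s]`, `[s, 1 - s]` and `[1 - s, 1]`
onto `[0, 1/2]`, `[1/2, 3/4]` and `[3/4, 1]`, the parts of `θ ⬝ (α ⬝ δ)` traversed by `θ`, `α`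
and `δ`. -/
def whiskerReparam (s : ℝ) : C(I, I) where
  toFun t := projIcc 0 1 zero_le_one
    (max (min (t / (2 * s)) (1 / 2 + (t - s) / (4 * (1 - 2 * s)))) (1 - (1 - t) / (4 * s)))
  continuous_toFun := continuous_projIcc.comp (by fun_prop)

theorem coe_whiskerReparam (s : ℝ) (t : I) : (whiskerReparam s t : ℝ) =
    max 0 (min 1
      (max (min (t / (2 * s)) (1 / 2 + (t - s) / (4 * (1 - 2 * s)))) (1 - (1 - t) / (4 * s)))) :=
  coe_projIcc _ _ zero_le_one _

section Whiskering

variable {s : ℝ}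

theorem whiskerReparam_zero (hs₀ : 0 < s) (hs : s ≤ 1 / 4) : whiskerReparam s 0 = 0 := by
  have h₁ : 0 ≤ 1 / 2 + (0 - s) / (4 * (1 - 2 * s)) := by
    rw [zero_sub, neg_div, ← sub_eq_add_neg, sub_nonneg, div_le_iff₀ (by linarith)]; linarith
  have h₂ : 1 - (1 - 0) / (4 * s) ≤ 0 := by
    rw [sub_nonpos, le_div_iff₀ (by positivity)]; linarith
  ext
  rw [coe_whiskerReparam, Icc.coe_zero, zero_div, min_eq_left h₁, max_eq_left h₂]
  simp

theorem whiskerReparam_one (hs : s ≤ 1 / 4) : whiskerReparam s 1 = 1 := by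
  have h : 1 / 2 + (1 - s) / (4 * (1 - 2 * s)) ≤ 1 - (1 - 1) / (4 * s) := by
    rw [sub_self, zero_div, sub_zero, ← le_sub_iff_add_le', div_le_iff₀ (by linarith)]; linarith
  ext
  rw [coe_whiskerReparam, Icc.coe_one, max_eq_right ((min_le_right _ _).trans h)]
  simp

theorem whiskerReparam_le_half (hs₀ : 0 < s) (hs : s ≤ 1 / 4) {t : I} (ht : (t : ℝ) ≤ s) :
    (whiskerReparam s t : ℝ) ≤ 1 / 2 := by
  have h₁ : (t : ℝ) / (2 * s) ≤ 1 / 2 := by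
    rw [div_le_iff₀ (by positivity)]; linarith
  have h₂ : 1 - (1 - t) / (4 * s) ≤ 1 / 2 := by
    rw [sub_le_comm, le_div_iff₀ (by positivity)]; linarith
  rw [coe_whiskerReparam]
  exact max_le (by norm_num) (min_le_of_right_le (max_le (min_le_of_left_le h₁) h₂))

theorem three_quarters_le_whiskerReparam (hs₀ : 0 < s) {t : I} (ht : 1 - s ≤ t) :
    3 / 4 ≤ (whiskerReparam s t : ℝ) := by
  have h : 3 / 4 ≤ 1 - (1 - t) / (4 * s) := by
    rw [le_sub_comm, div_le_iff₀ (by positivity)]; linarith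
  rw [coe_whiskerReparam]
  exact le_max_of_le_right (le_min (by norm_num) (le_max_of_le_right h))

theorem whiskerReparam_of_mem (hs₀ : 0 < s) (hs : s ≤ 1 / 4) {t : I} (ht₁ : s ≤ t)
    (ht₂ : t ≤ 1 - s) :
    (whiskerReparam s t : ℝ) = 1 / 2 + (t - s) / (4 * (1 - 2 * s)) := by
  have hA : 0 < 4 * (1 - 2 * s) := by linarith
  have h₁ : 1 / 2 + (t - s) / (4 * (1 - 2 * s)) ≤ t / (2 * s) := by
    rw [div_add_div _ _ (by norm_num) hA.ne', div_le_div_iff₀ (by positivity) (by positivity)]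
    nlinarith
  have h₂ : 1 - (1 - t) / (4 * s) ≤ 1 / 2 + (t - s) / (4 * (1 - 2 * s)) := by
    rw [sub_le_iff_le_add, add_assoc, div_add_div _ _ hA.ne' (by positivity),
      div_add_div _ _ (by norm_num) (by positivity), le_div_iff₀ (by positivity)]
    nlinarith
  have h₃ : 1 / 2 ≤ 1 / 2 + (t - s) / (4 * (1 - 2 * s)) :=
    le_add_of_nonneg_right (div_nonneg (by linarith) hA.le)
  have h₄ : 1 / 2 + (t - s) / (4 * (1 - 2 * s)) ≤ 1 := by
    rw [← le_sub_iff_add_le', div_le_iff₀ hA]; nlinarith [t.2.2]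
  rw [coe_whiskerReparam, min_eq_right h₁, max_eq_left h₂, min_eq_right h₄,
    max_eq_right ((by norm_num : (0:ℝ) ≤ 1 / 2).trans h₃)]

variable {α : C(I, X)} {x y : X} (θ : Path x (α 0)) (δ : Path (α 1) y)

theorem whisker_apply_mem_left (hs₀ : 0 < s) (hs : s ≤ 1 / 4) {t : I} (ht : (t : ℝ) ≤ s) :
    (θ.trans ((toPath α).trans δ)) (whiskerReparam s t) ∈ range θ := by
  rw [← Path.extend_extends', Path.extend_trans_of_le_half _ _
    (whiskerReparam_le_half hs₀ hs ht), ← Path.extend_range]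
  exact mem_range_self _

theorem whisker_apply_mem_right (hs₀ : 0 < s) {t : I} (ht : 1 - s ≤ t) :
    (θ.trans ((toPath α).trans δ)) (whiskerReparam s t) ∈ range δ := by
  have h := three_quarters_le_whiskerReparam hs₀ ht
  rw [← Path.extend_extends', Path.extend_trans_of_half_le _ _ (by linarith),
    Path.extend_trans_of_half_le _ _ (by linarith), ← Path.extend_range]
  exact mem_range_self _

theorem whisker_apply_of_mem (hs₀ : 0 < s) (hs : s ≤ 1 / 4) {t : I} (ht₁ : s ≤ t)
    (ht₂ : t ≤ 1 - s) :
    (θ.trans ((toPath α).trans δ)) (whiskerReparam s t) =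
      (toPath α).extend ((t - s) / (1 - 2 * s)) := by
  have h := whiskerReparam_of_mem hs₀ hs ht₁ ht₂
  have hA : 0 < 4 * (1 - 2 * s) := by linarith
  have h₀ : 0 ≤ (t - s) / (4 * (1 - 2 * s)) := div_nonneg (by linarith) hA.le
  have h₁ : (t - s) / (4 * (1 - 2 * s)) ≤ 1 / 4 := by
    rw [div_le_iff₀ hA]; linarith
  rw [← Path.extend_extends', Path.extend_trans_of_half_le _ _ (by linarith),
    Path.extend_trans_of_le_half _ _ (by linarith), h]
  congr 1
  field_simp
  ring

end Whiskering

theorem eventually_whisker_mapsTo (α : C(I, X)) {K : Set I} (hK : IsCompact K) {O : Set X}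
    (hO : IsOpen O) (hα : MapsTo α K O) :
    ∀ᶠ s in 𝓝 (0 : ℝ), ∀ t ∈ K, (toPath α).extend ((t - s) / (1 - 2 * s)) ∈ O ∧
      ((t : ℝ) ≤ s → (0 : I) ∈ K) ∧ (1 - s ≤ t → (1 : I) ∈ K) := by
  refine hK.eventually_forall_of_forall_eventually fun t ht => ?_
  have hcont : ContinuousAt (fun z : ℝ × I => (toPath α).extend ((z.2 - z.1) / (1 - 2 * z.1)))
      (0, t) :=
    (toPath α).continuous_extend.continuousAt.comp
      (ContinuousAt.div (by fun_prop) (by fun_prop) (by norm_num))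
  refine Filter.Eventually.and (hcont.preimage_mem_nhds (hO.mem_nhds ?_)) (.and ?_ ?_)
  · simpa using hα ht
  · by_cases h0 : (0 : I) ∈ K
    · exact .of_forall fun _ _ => h0
    · have ht0 : (0 : ℝ) < t :=
        lt_of_le_of_ne t.2.1 (coe_ne_zero.2 fun h => h0 (h ▸ ht)).symm
      filter_upwards [(continuous_fst.continuousAt (x := ((0 : ℝ), t))).eventually_lt
        (continuous_subtype_val.comp continuous_snd).continuousAt ht0] with z hz hle
      exact absurd hle (not_le.2 hz)
  · by_cases h1 : (1 : I) ∈ K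
    · exact .of_forall fun _ _ => h1
    · have ht1 : (t : ℝ) < 1 - (0 : ℝ) :=
        (sub_zero (1 : ℝ)).symm ▸ lt_of_le_of_ne t.2.2 (coe_ne_one.2 fun h => h1 (h ▸ ht))
      filter_upwards [(continuous_subtype_val.comp continuous_snd).continuousAt.eventually_lt
        (continuous_const.sub continuous_fst).continuousAt (x₀ := ((0 : ℝ), t)) ht1] with z hz hle
      exact absurd hle (not_le.2 hz)

def whiskerSet (α : C(I, X)) (s : ℝ) (V U : Set X) : Set C(I, X) :=
  {g | ∃ (x y : X) (θ : Path x (α 0)) (δ : Path (α 1) y), range θ ⊆ V ∧ range δ ⊆ U ∧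
    g = (θ.trans ((toPath α).trans δ)).toContinuousMap.comp (whiskerReparam s)}

theorem tendsto_whiskerSet (α : C(I, X)) :
    Tendsto (fun p : ℝ × Set X × Set X => whiskerSet α p.1 p.2.1 p.2.2)
      (𝓝[>] 0 ×ˢ (𝓝 (α 0)).smallSets ×ˢ (𝓝 (α 1)).smallSets) (𝓝 α).smallSets := by
  simp only [ContinuousMap.nhds_compactOpen, smallSets_iInf, smallSets_principal, tendsto_iInf,
    tendsto_principal]
  intro K hK O hO hαO
  have hs : ∀ᶠ s in 𝓝[>] (0 : ℝ), s ∈ Ioo 0 (1 / 4) ∧ ∀ t ∈ K,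
      (toPath α).extend ((t - s) / (1 - 2 * s)) ∈ O ∧
        ((t : ℝ) ≤ s → (0 : I) ∈ K) ∧ (1 - s ≤ t → (1 : I) ∈ K) :=
    Filter.Eventually.and (Ioo_mem_nhdsGT (by norm_num))
      (nhdsWithin_le_nhds (eventually_whisker_mapsTo α hK hO hαO))
  have hV : ∀ᶠ V in (𝓝 (α 0)).smallSets, (0 : I) ∈ K → V ⊆ O := by
    by_cases h0 : (0 : I) ∈ K
    · filter_upwards [eventually_smallSets_subset.2 (hO.mem_nhds (hαO h0))] with V hV _ using hV
    · exact .of_forall fun _ h => absurd h h0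
  have hU : ∀ᶠ U in (𝓝 (α 1)).smallSets, (1 : I) ∈ K → U ⊆ O := by
    by_cases h1 : (1 : I) ∈ K
    · filter_upwards [eventually_smallSets_subset.2 (hO.mem_nhds (hαO h1))] with U hU _ using hU
    · exact .of_forall fun _ h => absurd h h1
  filter_upwards [hs.prod_mk (hV.prod_mk hU)] with ⟨s, V, U⟩ ⟨⟨⟨hs₀, hs⟩, hK⟩, hVO, hUO⟩
  rintro _ ⟨x, y, θ, δ, hθ, hδ, rfl⟩ t ht
  obtain ⟨hαt, h0, h1⟩ := hK t ht
  rcases le_or_gt (t : ℝ) s with h | h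
  · exact hVO (h0 h) (hθ (whisker_apply_mem_left θ δ hs₀ hs.le h))
  rcases le_or_gt (1 - s) t with h' | h'
  · exact hUO (h1 h') (hδ (whisker_apply_mem_right θ δ hs₀ h'))
  · simpa [whisker_apply_of_mem θ δ hs₀ hs.le h.le h'.le] using hαt

theorem exists_whisker_mem_image {α : C(I, X)} {W : Set C(I, X)} (hW : W ∈ 𝓝 α) :
    ∃ V ∈ 𝓝 (α 0), ∃ U ∈ 𝓝 (α 1), ∀ {x y : X} (θ : Path x (α 0)) (δ : Path (α 1) y),
      range θ ⊆ V → range δ ⊆ U →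
        pq (θ.trans ((toPath α).trans δ)).toContinuousMap ∈ pq '' W := by
  have h := (Filter.Eventually.prod_inl (Ioo_mem_nhdsGT (by norm_num : (0 : ℝ) < 1 / 4)) _).and
    (tendsto_smallSets_iff.1 (tendsto_whiskerSet α) W hW)
  obtain ⟨s, hs⟩ := h.curry.exists
  obtain ⟨pV, hpV, pU, hpU, hP⟩ := eventually_prod_iff.1 hs
  obtain ⟨V, hV, hVp⟩ := eventually_smallSets.1 hpV
  obtain ⟨U, hU, hUp⟩ := eventually_smallSets.1 hpU
  refine ⟨V, hV, U, hU, fun θ δ hθ hδ => ?_⟩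
  obtain ⟨⟨hs₀, hs⟩, hsW⟩ := hP (hVp V subset_rfl) (hUp U subset_rfl)
  refine ⟨_, hsW ⟨_, _, θ, δ, hθ, hδ, rfl⟩, (pq_eq_pq_iff_homotopic.2 ⟨.reparam _ _
    (whiskerReparam s).continuous (whiskerReparam_zero hs₀ hs.le) (whiskerReparam_one hs.le)⟩).symm⟩

theorem isOpenMap_pq [LocallyPathConnectedSpace X] (hX : SemilocSimplyConnected X) :
    IsOpenMap (pq : C(I, X) → Pi1 X) := by
  intro W hW
  rw [← isQuotientMap_pq.isOpen_preimage, isOpen_iff_mem_nhds]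
  rintro β ⟨α, hαW, hαβ⟩
  have h0 : α 0 = β 0 := congrArg srcMap hαβ
  have h1 : α 1 = β 1 := congrArg rngMap hαβ
  obtain ⟨V, hV, U, hU, hVU⟩ := exists_whisker_mem_image (hW.mem_nhds hαW)
  filter_upwards [whiskeredNear_zero_one hX β V (h0 ▸ hV) U (h1 ▸ hU)]
    with β' ⟨θ, δ, hθ, hδ, hβ'⟩
  obtain ⟨g, hgW, hg⟩ := hVU (θ.cast rfl h0) (δ.cast h1 rfl) hθ hδ
  refine ⟨g, hgW, hg.trans ?_⟩
  have hαβ' : pq (toPath α).toContinuousMap = pq (subpathOf β 0 1).toContinuousMap := by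
    rw [toContinuousMap_subpathOf_zero_one]; exact hαβ
  calc pq ((θ.cast rfl h0).trans ((toPath α).trans (δ.cast h1 rfl))).toContinuousMap
      = pq (θ.trans ((subpathOf β 0 1).trans δ)).toContinuousMap :=
        pq_trans_congr rfl (pq_trans_congr hαβ' rfl)
    _ = pq ((θ.trans (subpathOf β 0 1)).trans δ).toContinuousMap :=
        pq_eq_pq_iff_homotopic.2 (Path.Homotopic.trans_assoc _ _ _).symm
    _ = pq (subpathOf β' 0 1).toContinuousMap := (pq_eq_pq_iff_homotopic.2 hβ').symm
    _ = pq β' := by rw [toContinuousMap_subpathOf_zero_one]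

theorem continuous_concat {Y : Type*} [TopologicalSpace Y] {f g : Y → C(I, X)}
    (hf : Continuous f) (hg : Continuous g) (h : ∀ y, g y 1 = f y 0) :
    Continuous fun y => concat (f y) (g y) (h y) :=
  ContinuousMap.continuous_of_continuous_uncurry _ <|
    Path.trans_continuous_family (fun y => toPath (g y))
      (continuous_eval.comp (hg.prodMap continuous_id))
      (fun y => (toPath (f y)).cast (h y) rfl)
      (continuous_eval.comp (hf.prodMap continuous_id))

theorem isQuotientMap_composable [LocallyPathConnectedSpace X] (hX : SemilocSimplyConnected X) :
    IsQuotientMap ({p : Pi1 X × Pi1 X | srcMap p.1 = rngMap p.2}.restrictPreimage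
      (Prod.map pq pq)) :=
  (((isOpenMap_pq hX).prodMap (isOpenMap_pq hX)).restrictPreimage _).isQuotientMap
    (isQuotientMap_pq.continuous.prodMap isQuotientMap_pq.continuous).restrictPreimage
    ((isQuotientMap_pq.surjective.prodMap isQuotientMap_pq.surjective).restrictPreimage _)

/-- For a locally path connected, semilocally simply connected `X`, the
composition map on `Π₁(X)^{(2)} = {(a,b) : s(a) = r(b)}` (with the subspace topology of the
product), sending `([α],[β])` with `α 0 = β 1` to `[α ⧠ β]`, is well defined and continuous. -/
theorem stmt4 {X : Type*} [TopologicalSpace X] [LocallyPathConnectedSpace X]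
    (hX : SemilocSimplyConnected X) :
    ∃ comp : { p : Pi1 X × Pi1 X // srcMap p.1 = rngMap p.2 } → Pi1 X,
      Continuous comp ∧
      ∀ (α β : C(I, X)) (h : β 1 = α 0),
        comp ⟨(pq α, pq β), h.symm⟩ = pq (concat α β h) := by
  have hQ := isQuotientMap_composable hX
  let concatPairs : C(Prod.map pq pq ⁻¹' {p : Pi1 X × Pi1 X | srcMap p.1 = rngMap p.2}, Pi1 X) :=
    ⟨fun p => pq (concat p.1.1 p.1.2 (Eq.symm p.2)), isQuotientMap_pq.continuous.comp
      (continuous_concat (continuous_fst.comp continuous_subtype_val)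
        (continuous_snd.comp continuous_subtype_val) _)⟩
  have hfac : Function.FactorsThrough concatPairs (Set.restrictPreimage _ (Prod.map pq pq)) :=
    fun p q hpq => pq_concat_congr (congrArg (·.1.1) hpq) (congrArg (·.1.2) hpq) _ _
  let comp := IsQuotientMap.lift (f := ⟨_, hQ.continuous⟩) hQ concatPairs hfac
  refine ⟨comp, comp.continuous, fun α β h => ?_⟩
  exact DFunLike.congr_fun (hQ.lift_comp (f := ⟨_, hQ.continuous⟩) concatPairs hfac)
    (⟨(α, β), h.symm⟩ : Prod.map pq pq ⁻¹' {p : Pi1 X × Pi1 X | srcMap p.1 = rngMap p.2})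

end
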